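/- A nonempty operator A ⊆ Z is representable if and only if its Penot function φ_A is a representative of A, that is, if and only if φ_A(z) ≥ p(z) for every z ∈ Z and A = {z ∈ Z : φ_A(z) = p(z)}. -/

import Mathlib

open Pointwise Filter Topology

noncomputable section

variable {E F : Type*} [NormedAddCommGroup E] [NormedSpace ℝ E]
  [NormedAddCommGroup F] [NormedSpace ℝ F]

/-- Duality pairing `p(x, x*) = x*(x)` on `E × E*` (the dual carrying the weak-star topology). -/
def pairing (z : E × WeakDual ℝ E) : ℝ := z.2 z.1

/-- Natural dual product `(x,x*)·(y,y*) = x*(y) + y*(x)`. -/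
def dprod (z w : E × WeakDual ℝ E) : ℝ := z.2 w.1 + w.2 z.1

/-- A (graph of a) multivalued operator is monotone. -/
def MonotoneSet (A : Set (E × WeakDual ℝ E)) : Prop :=
  ∀ a ∈ A, ∀ b ∈ A, 0 ≤ (a.2 - b.2) (a.1 - b.1)

/-- Maximal monotone: monotone and maximal with respect to inclusion among monotone sets. -/
def MaximalMonotoneSet (A : Set (E × WeakDual ℝ E)) : Prop :=
  MonotoneSet A ∧ ∀ B, MonotoneSet B → A ⊆ B → A = B

/-- Fitzpatrick function `h_A(z) = sup_{a ∈ A} (z·a − p(a))`. -/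
def fitz (A : Set (E × WeakDual ℝ E)) (z : E × WeakDual ℝ E) : EReal :=
  ⨆ a ∈ A, ((dprod z a - pairing a : ℝ) : EReal)

/-- Conjugate with respect to the natural dual product. -/
def econj (g : E × WeakDual ℝ E → EReal) (w : E × WeakDual ℝ E) : EReal :=
  ⨆ z, ((dprod w z : ℝ) : EReal) - g z

/-- Penot function `φ_A = (h_A)*`. -/
def penot (A : Set (E × WeakDual ℝ E)) : E × WeakDual ℝ E → EReal := econj (fitz A)

/-- Convexity for extended-real-valued functions. -/
def EConvex (h : E × WeakDual ℝ E → EReal) : Prop :=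
  ∀ z w : E × WeakDual ℝ E, ∀ a b : ℝ, 0 ≤ a → 0 ≤ b → a + b = 1 →
    h (a • z + b • w) ≤ (a : EReal) * h z + (b : EReal) * h w

/-- `h` is a representative of `A`: proper, convex, lower semicontinuous in the
strong × weak-star topology (the product topology of `E × WeakDual ℝ E`),
`h ≥ p` everywhere and `A = {h = p}`. -/
def IsRepresentative (h : E × WeakDual ℝ E → EReal) (A : Set (E × WeakDual ℝ E)) : Prop :=
  (∀ z, h z ≠ ⊥) ∧ (∃ z, h z ≠ ⊤) ∧ EConvex h ∧ LowerSemicontinuous h ∧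
  (∀ z, (pairing z : EReal) ≤ h z) ∧ A = {z | h z = (pairing z : EReal)}

/-- An operator is representable if it admits a representative. -/
def Representable (A : Set (E × WeakDual ℝ E)) : Prop := ∃ h, IsRepresentative h A

/-- Domain of a multivalued operator. -/
def opDom (A : Set (E × WeakDual ℝ E)) : Set E := {x | ∃ u, (x, u) ∈ A}

/-- Sum of multivalued operators: `A + B = {(x, u+v) : (x,u) ∈ A, (x,v) ∈ B}`. -/
def opSum (A B : Set (E × WeakDual ℝ E)) : Set (E × WeakDual ℝ E) :=
  {z | ∃ u v, (z.1, u) ∈ A ∧ (z.1, v) ∈ B ∧ z.2 = u + v}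

/-- The adjoint `L* y* = y* ∘ L`. -/
def adjoint (L : E →L[ℝ] F) (g : WeakDual ℝ F) : WeakDual ℝ E :=
  ContinuousLinearMap.comp (g : F →L[ℝ] ℝ) L

/-- The composition `L* M L = {(x, L* y*) : (Lx, y*) ∈ M}`. -/
def opComp (L : E →L[ℝ] F) (M : Set (F × WeakDual ℝ F)) : Set (E × WeakDual ℝ E) :=
  {z | ∃ g, (L z.1, g) ∈ M ∧ z.2 = adjoint L g}

/-- `0 ∈ ^{ic}S`: the union `⋃_{n ≥ 1} n • S` is a closed linear subspace. -/
def ZeroInIC {G : Type*} [AddCommGroup G] [Module ℝ G] [TopologicalSpace G] (S : Set G) : Prop :=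
  ∃ W : Submodule ℝ G, ((W : Set G) = ⋃ (n : ℕ) (_ : 1 ≤ n), (n : ℝ) • S) ∧ IsClosed (W : Set G)

end


noncomputable section AuxFM

variable {E : Type*} [NormedAddCommGroup E] [NormedSpace ℝ E]

instance : LocallyConvexSpace ℝ (WeakDual ℝ E) :=
  WeakBilin.locallyConvexSpace (B := topDualPairing ℝ E)

lemma dprod_comm (z w : E × WeakDual ℝ E) : dprod z w = dprod w z := add_comm _ _

lemma dprod_smul_add (z u v : E × WeakDual ℝ E) (a b : ℝ) :
    dprod z (a • u + b • v) = a * dprod z u + b * dprod z v := by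
  simp only [dprod, Prod.smul_fst, Prod.smul_snd, Prod.fst_add, Prod.snd_add,
    map_add, map_smul, smul_eq_mul]
  have : ((a • u.2 + b • v.2 : WeakDual ℝ E)) z.1 = a * u.2 z.1 + b * v.2 z.1 := rfl
  rw [this]; ring

lemma dprod_smul (z u : E × WeakDual ℝ E) (a : ℝ) : dprod z (a • u) = a * dprod z u := by
  have := dprod_smul_add z u u a 0
  simpa using this

lemma dprod_add (z u v : E × WeakDual ℝ E) : dprod z (u + v) = dprod z u + dprod z v := by
  have := dprod_smul_add z u v 1 1
  simpa using this

lemma le_econj (g : E × WeakDual ℝ E → EReal) (w z : E × WeakDual ℝ E) :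
    ((dprod w z : ℝ) : EReal) - g z ≤ econj g w :=
  le_iSup (fun z => ((dprod w z : ℝ) : EReal) - g z) z

lemma econj_antitone {g₁ g₂ : E × WeakDual ℝ E → EReal} (h : ∀ z, g₁ z ≤ g₂ z) :
    ∀ w, econj g₂ w ≤ econj g₁ w := fun w =>
  iSup_mono fun z => EReal.sub_le_sub le_rfl (h z)

lemma econj_le (g : E × WeakDual ℝ E → EReal) (w : E × WeakDual ℝ E) (m : EReal)
    (hm : ∀ z, ((dprod w z : ℝ) : EReal) - g z ≤ m) : econj g w ≤ m := iSup_le hm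

lemma econj_bound (h : E × WeakDual ℝ E → EReal) (hbot : ∀ z, h z ≠ ⊥)
    (w : E × WeakDual ℝ E) (s u : ℝ) (hs : 0 < s)
    (hb : ∀ (z : E × WeakDual ℝ E) (t : ℝ), h z = (t : EReal) → dprod z w - s * t ≤ u) :
    econj h (s⁻¹ • w) ≤ ((u / s : ℝ) : EReal) := by
  apply econj_le
  intro z
  rcases eq_top_or_lt_top (h z) with hz | hz
  · rw [hz, EReal.sub_top]; exact bot_le
  · set t := (h z).toReal with ht
    have hzt : h z = (t : EReal) := (EReal.coe_toReal hz.ne (hbot z)).symm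
    rw [hzt, ← EReal.coe_sub, EReal.coe_le_coe_iff]
    have hdd : dprod (s⁻¹ • w) z = s⁻¹ * dprod z w := by
      rw [dprod_comm, dprod_smul, dprod_comm]
    rw [hdd]
    rw [le_div_iff₀ hs]
    have hexp : (s⁻¹ * dprod z w - t) * s = dprod z w - s * t := by
      field_simp
    rw [hexp]
    linarith [hb z t hzt]

lemma epi_convex (h : E × WeakDual ℝ E → EReal) (hconv : EConvex h) :
    Convex ℝ {q : (E × WeakDual ℝ E) × ℝ | h q.1 ≤ (q.2 : EReal)} := by
  intro q hq q' hq' a b ha hb hab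
  simp only [Set.mem_setOf_eq] at hq hq' ⊢
  have h1 : (a • q + b • q').1 = a • q.1 + b • q'.1 := rfl
  have h2 : (a • q + b • q').2 = a * q.2 + b * q'.2 := rfl
  rw [h1, h2]
  calc h (a • q.1 + b • q'.1) ≤ (a : EReal) * h q.1 + (b : EReal) * h q'.1 :=
        hconv q.1 q'.1 a b ha hb hab
    _ ≤ (a : EReal) * (q.2 : EReal) + (b : EReal) * (q'.2 : EReal) := by
        gcongr
    _ = ((a * q.2 + b * q'.2 : ℝ) : EReal) := by
        rw [EReal.coe_add, EReal.coe_mul, EReal.coe_mul]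

lemma epi_closed (h : E × WeakDual ℝ E → EReal) (hlsc : LowerSemicontinuous h) :
    IsClosed {q : (E × WeakDual ℝ E) × ℝ | h q.1 ≤ (q.2 : EReal)} := by
  rw [← isOpen_compl_iff]
  rw [isOpen_iff_mem_nhds]
  intro q hq
  simp only [Set.mem_compl_iff, Set.mem_setOf_eq, not_le] at hq
  obtain ⟨c, hc1, hc2⟩ := EReal.exists_between_coe_real hq
  have hU : {z : E × WeakDual ℝ E | (c : EReal) < h z} ∈ 𝓝 q.1 := hlsc q.1 (c : EReal) hc2
  have hV : Set.Iio c ∈ 𝓝 q.2 := Iio_mem_nhds (by exact_mod_cast hc1)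
  have hprod : {z : E × WeakDual ℝ E | (c : EReal) < h z} ×ˢ Set.Iio c ∈ 𝓝 q := by
    rw [← @Prod.mk.eta _ _ q, nhds_prod_eq]
    exact Filter.prod_mem_prod hU hV
  refine Filter.mem_of_superset hprod ?_
  rintro ⟨z, t⟩ ⟨hz, ht⟩
  simp only [Set.mem_setOf_eq] at hz
  simp only [Set.mem_Iio] at ht
  simp only [Set.mem_compl_iff, Set.mem_setOf_eq, not_le]
  exact lt_trans (by exact_mod_cast ht) hz

/-- evaluation at a point as linear functional on the weak-star dual -/
def evalLM (x : E) : WeakDual ℝ E →ₗ[ℝ] ℝ where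
  toFun φ := φ x
  map_add' _ _ := rfl
  map_smul' _ _ := rfl

lemma weakdual_eval (k : WeakDual ℝ E →L[ℝ] ℝ) : ∃ x : E, ∀ φ : WeakDual ℝ E, k φ = φ x := by
  have hc : Continuous k := k.continuous
  have h0 : k ⁻¹' Metric.ball (0:ℝ) 1 ∈ 𝓝 (0 : WeakDual ℝ E) := by
    have : Metric.ball (0:ℝ) 1 ∈ 𝓝 (k 0) := by
      rw [map_zero]; exact Metric.ball_mem_nhds _ one_pos
    exact hc.continuousAt.preimage_mem_nhds this
  have hbasis := LinearMap.hasBasis_weakBilin (topDualPairing ℝ E)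
  obtain ⟨U, hU, hUsub⟩ := hbasis.mem_iff.1 h0
  obtain ⟨s, r, hr, rfl⟩ := (SeminormFamily.basisSets_iff _).1 hU
  have key : ∀ φ : WeakDual ℝ E, (∀ x ∈ s, φ x = 0) → k φ = 0 := by
    intro φ hφ
    by_contra hne
    have hball0 : ∀ ψ : WeakDual ℝ E, (∀ x ∈ s, ψ x = 0) →
        ψ ∈ (s.sup (LinearMap.toSeminormFamily (topDualPairing ℝ E))).ball 0 r := by
      intro ψ hψ
      rw [Seminorm.ball_finset_sup_eq_iInter _ _ _ hr]
      refine Set.mem_iInter₂.2 fun x hx => ?_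
      refine (Seminorm.mem_ball_zero _).2 ?_
      change ‖(topDualPairing ℝ E) ψ x‖ < r
      have hφx : (topDualPairing ℝ E) ψ x = 0 := hψ x hx
      show ‖(topDualPairing ℝ E) ψ x‖ < r
      rw [hφx, norm_zero]; exact hr
    have hball : ∀ t : ℝ, (t • φ) ∈ (s.sup (LinearMap.toSeminormFamily (topDualPairing ℝ E))).ball 0 r := by
      intro t
      refine hball0 (t • φ) fun x hx => ?_
      show t * φ x = 0
      rw [hφ x hx, mul_zero]
    have habs : ∀ t : ℝ, |t| * |k φ| < 1 := by
      intro t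
      have := hUsub (hball t)
      change dist (k (t • φ)) 0 < 1 at this
      rw [dist_zero_right] at this
      rw [map_smul, smul_eq_mul, Real.norm_eq_abs, abs_mul] at this
      exact this
    have h2 := habs (2 / |k φ|)
    rw [abs_div, abs_abs, abs_two, div_mul_cancel₀] at h2
    · norm_num at h2
    · exact abs_ne_zero.2 hne
  let L : s → WeakDual ℝ E →ₗ[ℝ] ℝ := fun x => evalLM x.1
  have hker : ⨅ i, LinearMap.ker (L i) ≤ LinearMap.ker (k : WeakDual ℝ E →ₗ[ℝ] ℝ) := by
    intro φ hφ
    simp only [Submodule.mem_iInf, LinearMap.mem_ker] at hφ ⊢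
    exact key φ fun x hx => hφ ⟨x, hx⟩
  have hspan := mem_span_of_iInf_ker_le_ker hker
  rw [Submodule.mem_span_range_iff_exists_fun] at hspan
  obtain ⟨c, hc'⟩ := hspan
  refine ⟨∑ i : s, c i • i.1, fun φ => ?_⟩
  have := congrArg (fun m : WeakDual ℝ E →ₗ[ℝ] ℝ => m φ) hc'
  simp only [LinearMap.coe_sum, Finset.sum_apply, LinearMap.smul_apply, smul_eq_mul] at this
  rw [show (k : WeakDual ℝ E →ₗ[ℝ] ℝ) φ = k φ from rfl] at this
  rw [← this, map_sum]
  simp only [map_smul, smul_eq_mul]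
  rfl

lemma repr_fun (f : ((E × WeakDual ℝ E) × ℝ) →L[ℝ] ℝ) :
    ∃ w : E × WeakDual ℝ E, ∃ c : ℝ, c = f (0, 1) ∧
      ∀ (z : E × WeakDual ℝ E) (t : ℝ), f (z, t) = dprod z w + t * c := by
  classical
  -- functional on the weak dual component
  let j : WeakDual ℝ E →L[ℝ] (E × WeakDual ℝ E) × ℝ :=
    (ContinuousLinearMap.inl ℝ (E × WeakDual ℝ E) ℝ).comp
      (ContinuousLinearMap.inr ℝ E (WeakDual ℝ E))
  obtain ⟨x₂, hx₂⟩ := weakdual_eval (f.comp j)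
  -- functional on the E component
  let g₁ : E →L[ℝ] ℝ := f.comp ((ContinuousLinearMap.inl ℝ (E × WeakDual ℝ E) ℝ).comp
      (ContinuousLinearMap.inl ℝ E (WeakDual ℝ E)))
  refine ⟨(x₂, (g₁ : WeakDual ℝ E)), f (0, 1), rfl, fun z t => ?_⟩
  have hsplit : (z, t) = (((z.1, 0), 0) : (E × WeakDual ℝ E) × ℝ) + ((0, z.2), 0)
      + t • ((0 : E × WeakDual ℝ E), (1:ℝ)) := by
    simp [Prod.ext_iff]
  rw [hsplit, map_add, map_add, map_smul]
  have h1 : f ((z.1, 0), 0) = g₁ z.1 := rfl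
  have h2 : f ((0, z.2), 0) = z.2 x₂ := by
    have : f ((0, z.2), 0) = f.comp j z.2 := rfl
    rw [this, hx₂]
  rw [h1, h2]
  show g₁ z.1 + z.2 x₂ + t * f (0,1) = (z.2 x₂ + g₁ z.1) + t * f (0,1)
  ring

theorem fenchel_moreau (h : E × WeakDual ℝ E → EReal) (hbot : ∀ z, h z ≠ ⊥)
    (hconv : EConvex h) (hlsc : LowerSemicontinuous h) (z₀ : E × WeakDual ℝ E) :
    h z₀ ≤ econj (econj h) z₀ := by
  -- it suffices to dominate every real number below `h z₀`
  have main : ∀ r : ℝ, (r : EReal) < h z₀ → (r : EReal) ≤ econj (econj h) z₀ := by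
    intro r hr
    by_cases hdom : ∀ z, h z = ⊤
    · -- empty domain: biconjugate is `⊤`
      have h1 : econj h z₀ = ⊥ := by
        refine le_bot_iff.1 (econj_le _ _ _ fun z => ?_)
        rw [hdom z, EReal.sub_top]
      have h2 : (⊤ : EReal) ≤ econj (econj h) z₀ := by
        refine le_trans ?_ (le_econj (econj h) z₀ z₀)
        rw [h1, EReal.coe_sub_bot]
      exact le_top.trans h2
    push_neg at hdom
    obtain ⟨z₁, hz₁⟩ := hdom
    set t₁ := (h z₁).toReal with ht₁
    have hz₁' : h z₁ = (t₁ : EReal) := (EReal.coe_toReal hz₁ (hbot z₁)).symm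
    set Epi : Set ((E × WeakDual ℝ E) × ℝ) := {q | h q.1 ≤ (q.2 : EReal)} with hEpi
    have hconvE : Convex ℝ Epi := epi_convex h hconv
    have hclosedE : IsClosed Epi := epi_closed h hlsc
    have hnotin : ((z₀, r) : (E × WeakDual ℝ E) × ℝ) ∉ Epi := by
      simp only [hEpi, Set.mem_setOf_eq, not_le]; exact hr
    obtain ⟨f, u, hfE, hfz₀⟩ := geometric_hahn_banach_closed_point hconvE hclosedE hnotin
    obtain ⟨w, c, hc, hf⟩ := repr_fun f
    have hfE' : ∀ (z : E × WeakDual ℝ E) (t : ℝ), h z ≤ (t : EReal) →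
        dprod z w + t * c < u := by
      intro z t ht
      have := hfE (z, t) ht
      rwa [hf z t] at this
    have hfz₀' : u < dprod z₀ w + r * c := by
      have := hfz₀
      rwa [hf z₀ r] at this
    -- the vertical slope is nonpositive
    have cle : ∀ (w' : E × WeakDual ℝ E) (c' u' : ℝ),
        (∀ (z : E × WeakDual ℝ E) (t : ℝ), h z ≤ (t : EReal) → dprod z w' + t * c' < u') →
        c' ≤ 0 := by
      intro w' c' u' hE'
      by_contra hpos
      push_neg at hpos
      set t := max t₁ ((u' - dprod z₁ w') / c') with htdef
      have h1 : dprod z₁ w' + t * c' < u' := by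
        refine hE' z₁ t ?_
        rw [hz₁']
        exact_mod_cast le_max_left _ _
      have h2 : (u' - dprod z₁ w') / c' ≤ t := le_max_right _ _
      have h3 : u' - dprod z₁ w' ≤ t * c' := by
        rw [div_le_iff₀ hpos] at h2
        linarith
      linarith
    have hcle : c ≤ 0 := cle w c u hfE'
    rcases hcle.lt_or_eq with hclt | hc0
    · -- main case: negative slope, normalize
      set s : ℝ := -c with hs
      have hspos : 0 < s := by simp [hs]; linarith
      have hb : ∀ (z : E × WeakDual ℝ E) (t : ℝ), h z = (t : EReal) →
          dprod z w - s * t ≤ u := by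
        intro z t hzt
        have := hfE' z t (le_of_eq hzt)
        have hsc : t * c = -(s * t) := by rw [hs]; ring
        linarith [this, hsc ▸ this]
      have hB := econj_bound h hbot w s u hspos hb
      have hA := le_econj (econj h) z₀ (s⁻¹ • w)
      have hreal : r ≤ s⁻¹ * dprod z₀ w - u / s := by
        have h5 : u < dprod z₀ w - r * s := by
          have : r * c = -(r * s) := by rw [hs]; ring
          linarith [hfz₀']
        have h6 : r < (dprod z₀ w - u) / s := (lt_div_iff₀ hspos).2 (by linarith)
        have heq : (dprod z₀ w - u) / s = s⁻¹ * dprod z₀ w - u / s := by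
          field_simp
        linarith
      have hdd : dprod z₀ (s⁻¹ • w) = s⁻¹ * dprod z₀ w := dprod_smul z₀ w s⁻¹
      calc (r : EReal) ≤ ((s⁻¹ * dprod z₀ w - u / s : ℝ) : EReal) := by
            exact_mod_cast hreal
        _ = ((s⁻¹ * dprod z₀ w : ℝ) : EReal) - ((u / s : ℝ) : EReal) := by
            rw [← EReal.coe_sub]
        _ ≤ ((dprod z₀ (s⁻¹ • w) : ℝ) : EReal) - econj h (s⁻¹ • w) := by
            rw [hdd]; exact EReal.sub_le_sub le_rfl hB
        _ ≤ econj (econj h) z₀ := hA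
    · -- degenerate case: slope 0; second separation
      have hgdom : ∀ (z : E × WeakDual ℝ E) (t : ℝ), h z ≤ (t : EReal) → dprod z w < u := by
        intro z t ht
        have := hfE' z t ht
        rw [hc0, mul_zero, add_zero] at this
        exact this
      have hgz₀ : u < dprod z₀ w := by
        rw [hc0, mul_zero, add_zero] at hfz₀'
        exact hfz₀' 
      have hnotin2 : ((z₁, t₁ - 1) : (E × WeakDual ℝ E) × ℝ) ∉ Epi := by
        simp only [hEpi, Set.mem_setOf_eq, not_le, hz₁']
        exact_mod_cast sub_lt_self t₁ one_pos
      obtain ⟨f', u', hfE2, hfz₁⟩ := geometric_hahn_banach_closed_point hconvE hclosedE hnotin2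
      obtain ⟨w₁, c', hc', hf'⟩ := repr_fun f'
      have hfE2' : ∀ (z : E × WeakDual ℝ E) (t : ℝ), h z ≤ (t : EReal) →
          dprod z w₁ + t * c' < u' := by
        intro z t ht
        have := hfE2 (z, t) ht
        rwa [hf' z t] at this
      have hc'le : c' ≤ 0 := cle w₁ c' u' hfE2'
      have hc'ne : c' ≠ 0 := by
        intro h0
        have h1 := hfE2' z₁ t₁ (le_of_eq hz₁')
        have h2 : u' < dprod z₁ w₁ + (t₁ - 1) * c' := by
          have := hfz₁; rwa [hf' z₁ (t₁ - 1)] at this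
        rw [h0] at h1 h2
        linarith
      have hs'pos : 0 < -c' := by
        rcases hc'le.lt_or_eq with h' | h'
        · linarith
        · exact absurd h' hc'ne
      set s' : ℝ := -c' with hs'
      have hb' : ∀ (z : E × WeakDual ℝ E) (t : ℝ), h z = (t : EReal) →
          dprod z w₁ - s' * t ≤ u' := by
        intro z t hzt
        have := hfE2' z t (le_of_eq hzt)
        have : dprod z w₁ + t * c' < u' := this
        have hsc : t * c' = -(s' * t) := by rw [hs']; ring
        linarith
      have hB' := econj_bound h hbot w₁ s' u' hs'pos hb'
      -- choose λ large
      set C : ℝ := s'⁻¹ * dprod z₀ w₁ - u' / s' with hC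
      set d : ℝ := dprod z₀ w - u with hd
      have hdpos : 0 < d := by rw [hd]; linarith
      set l : ℝ := max 0 ((r - C) / d) with hl
      have hl0 : 0 ≤ l := le_max_left _ _
      have hlC : r ≤ C + l * d := by
        rcases le_or_gt (r - C) 0 with hrc | hrc
        · have : 0 ≤ l * d := mul_nonneg hl0 hdpos.le
          linarith
        · have h2 : (r - C) / d ≤ l := le_max_right _ _
          rw [div_le_iff₀ hdpos] at h2
          linarith
      set wl : E × WeakDual ℝ E := s'⁻¹ • w₁ + l • w with hwl
      -- bound the conjugate at wl
      have hBwl : econj h wl ≤ ((u' / s' + l * u : ℝ) : EReal) := by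
        apply econj_le
        intro z
        rcases eq_top_or_lt_top (h z) with hz | hz
        · rw [hz, EReal.sub_top]; exact bot_le
        · have hzt : h z = ((h z).toReal : EReal) := (EReal.coe_toReal hz.ne (hbot z)).symm
          set t := (h z).toReal
          rw [hzt, ← EReal.coe_sub, EReal.coe_le_coe_iff]
          have hdw : dprod wl z = s'⁻¹ * dprod z w₁ + l * dprod z w := by
            rw [dprod_comm, hwl, dprod_smul_add]
          rw [hdw]
          have h1 : dprod z w₁ - s' * t ≤ u' := hb' z t hzt
          have h2 : dprod z w < u := hgdom z t (le_of_eq hzt)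
          have h3 : s'⁻¹ * dprod z w₁ - t ≤ u' / s' := by
            have hss : (dprod z w₁ - s' * t) / s' = s'⁻¹ * dprod z w₁ - t := by
              field_simp
            rw [← hss]
            gcongr
          have h4 : l * dprod z w ≤ l * u := mul_le_mul_of_nonneg_left h2.le hl0
          linarith
      have hA := le_econj (econj h) z₀ wl
      have hdwz : dprod z₀ wl = s'⁻¹ * dprod z₀ w₁ + l * dprod z₀ w := by
        rw [hwl, dprod_smul_add]
      have hreal : r ≤ dprod z₀ wl - (u' / s' + l * u) := by
        rw [hdwz]
        have heq : C + l * d = s'⁻¹ * dprod z₀ w₁ + l * dprod z₀ w - (u' / s' + l * u) := by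
          rw [hC, hd]; ring
        exact le_of_le_of_eq hlC heq
      calc (r : EReal) ≤ ((dprod z₀ wl - (u' / s' + l * u) : ℝ) : EReal) := by
            exact_mod_cast hreal
        _ = ((dprod z₀ wl : ℝ) : EReal) - ((u' / s' + l * u : ℝ) : EReal) := by
            rw [← EReal.coe_sub]
        _ ≤ ((dprod z₀ wl : ℝ) : EReal) - econj h wl := EReal.sub_le_sub le_rfl hBwl
        _ ≤ econj (econj h) z₀ := hA
  -- conclude
  by_contra hcon
  push_neg at hcon
  obtain ⟨r, hr1, hr2⟩ := EReal.exists_between_coe_real hcon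
  exact absurd (main r hr2) (not_le.2 hr1)

lemma continuous_dprod_left (z : E × WeakDual ℝ E) :
    Continuous fun w : E × WeakDual ℝ E => dprod w z := by
  -- dprod w z = w.2 z.1 + z.2 w.1
  have h1 : Continuous fun w : E × WeakDual ℝ E => w.2 z.1 :=
    (WeakBilin.eval_continuous _ z.1).comp continuous_snd
  have h2 : Continuous fun w : E × WeakDual ℝ E => z.2 w.1 :=
    (map_continuous z.2).comp continuous_fst
  exact h1.add h2

lemma econj_lsc (g : E × WeakDual ℝ E → EReal) : LowerSemicontinuous (econj g) := by
  apply lowerSemicontinuous_iSup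
  intro z
  rcases eq_top_or_lt_top (g z) with hz | hz
  · have : (fun w : E × WeakDual ℝ E => ((dprod w z : ℝ) : EReal) - g z) = fun _ => ⊥ := by
      funext w; rw [hz]; exact EReal.sub_top _
    rw [this]; exact lowerSemicontinuous_const
  rcases eq_bot_or_bot_lt (g z) with hz' | hz'
  · have : (fun w : E × WeakDual ℝ E => ((dprod w z : ℝ) : EReal) - g z) = fun _ => ⊤ := by
      funext w; rw [hz']; exact EReal.coe_sub_bot _
    rw [this]; exact lowerSemicontinuous_const
  · lift g z to ℝ using ⟨hz.ne, hz'.ne'⟩ with c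
    have : (fun w : E × WeakDual ℝ E => ((dprod w z : ℝ) : EReal) - (c : EReal))
        = fun w => (((dprod w z - c : ℝ)) : EReal) := by
      funext w; rw [EReal.coe_sub]
    rw [this]
    exact (continuous_coe_real_ereal.comp ((continuous_dprod_left z).sub continuous_const)).lowerSemicontinuous

lemma econj_convex (g : E × WeakDual ℝ E → EReal) : EConvex (econj g) := by
  intro z w a b ha hb hab
  apply iSup_le
  intro v
  rw [show dprod (a • z + b • w) v = a * dprod z v + b * dprod w v from by
    rw [dprod, dprod, dprod]
    simp only [Prod.smul_fst, Prod.smul_snd, Prod.fst_add, Prod.snd_add, map_add, map_smul,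
      smul_eq_mul]
    have : ((a • z.2 + b • w.2 : WeakDual ℝ E)) v.1 = a * z.2 v.1 + b * w.2 v.1 := rfl
    rw [this]; ring]
  rcases eq_top_or_lt_top (g v) with hv | hv
  · rw [hv, EReal.sub_top]; exact bot_le
  rcases eq_bot_or_bot_lt (g v) with hv' | hv'
  · -- g v = ⊥ : both econj values are ⊤
    have hz : econj g z = ⊤ := top_unique (le_trans (by rw [hv', EReal.coe_sub_bot]) (le_econj g z v))
    have hw : econj g w = ⊤ := top_unique (le_trans (by rw [hv', EReal.coe_sub_bot]) (le_econj g w v))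
    rw [hz, hw, hv', EReal.coe_sub_bot]
    have htop : (a : EReal) * ⊤ + (b : EReal) * ⊤ = ⊤ := by
      rcases ha.eq_or_lt with h | h
      · have hb1 : b = 1 := by linarith
        rw [← h, hb1]; simp
      · rw [EReal.mul_top_of_pos (by exact_mod_cast h)]
        rcases hb.eq_or_lt with h' | h'
        · rw [← h']; simp
        · rw [EReal.mul_top_of_pos (by exact_mod_cast h')]; simp
    rw [htop]
  · obtain ⟨c, hc⟩ : ∃ c : ℝ, g v = (c : EReal) :=
      ⟨(g v).toReal, (EReal.coe_toReal hv.ne hv'.ne').symm⟩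
    have h1 : ((dprod z v - c : ℝ) : EReal) ≤ econj g z := by
      rw [EReal.coe_sub, ← hc]; exact le_econj g z v
    have h2 : ((dprod w v - c : ℝ) : EReal) ≤ econj g w := by
      rw [EReal.coe_sub, ← hc]; exact le_econj g w v
    rw [hc]
    calc ((a * dprod z v + b * dprod w v : ℝ) : EReal) - (c : EReal)
        = ((a * (dprod z v - c) + b * (dprod w v - c) : ℝ) : EReal) := by
          rw [← EReal.coe_sub]; norm_cast; linear_combination c * hab
      _ = (a : EReal) * ((dprod z v - c : ℝ) : EReal)
          + (b : EReal) * ((dprod w v - c : ℝ) : EReal) := by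
          rw [EReal.coe_add, EReal.coe_mul, EReal.coe_mul]
      _ ≤ (a : EReal) * econj g z + (b : EReal) * econj g w := by
          gcongr

lemma fitz_le_econj_of_eq (A : Set (E × WeakDual ℝ E)) (h : E × WeakDual ℝ E → EReal)
    (hA : ∀ a ∈ A, h a = (pairing a : EReal)) (z : E × WeakDual ℝ E) :
    fitz A z ≤ econj h z := by
  refine iSup₂_le fun a ha => ?_
  rw [EReal.coe_sub, ← hA a ha]
  exact le_econj h z a

lemma penot_le_pairing (A : Set (E × WeakDual ℝ E)) {a : E × WeakDual ℝ E} (ha : a ∈ A) :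
    penot A a ≤ (pairing a : EReal) := by
  refine econj_le _ _ _ fun z => ?_
  have hfz : ((dprod z a - pairing a : ℝ) : EReal) ≤ fitz A z :=
    le_iSup₂ (f := fun (b : E × WeakDual ℝ E) (_ : b ∈ A) =>
      ((dprod z b - pairing b : ℝ) : EReal)) a ha
  calc ((dprod a z : ℝ) : EReal) - fitz A z
      ≤ ((dprod a z : ℝ) : EReal) - ((dprod z a - pairing a : ℝ) : EReal) :=
        EReal.sub_le_sub le_rfl hfz
    _ = ((pairing a : ℝ) : EReal) := by
        rw [← EReal.coe_sub]
        norm_cast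
        rw [dprod_comm]
        ring

end AuxFM

/-- A nonempty `A ⊆ Z` is representable iff its Penot function `φ_A` is a
representative of `A`, i.e., iff `φ_A ≥ p` everywhere and `A = {φ_A = p}`. -/
theorem representable_iff_penot_representative {X : Type*} [NormedAddCommGroup X]
    [NormedSpace ℝ X] (A : Set (X × WeakDual ℝ X)) (hne : A.Nonempty) :
    Representable A ↔
      ((∀ z : X × WeakDual ℝ X, (pairing z : EReal) ≤ penot A z) ∧
        A = {z | penot A z = (pairing z : EReal)}) := by
  constructor
  · rintro ⟨h, hb, -, hcv, hlsc, hgep, hAeq⟩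
    have hAmem : ∀ a ∈ A, h a = (pairing a : EReal) := by
      intro a ha
      have : a ∈ {z | h z = (pairing z : EReal)} := hAeq ▸ ha
      exact this
    have hfle : ∀ z, fitz A z ≤ econj h z := fitz_le_econj_of_eq A h hAmem
    have h1 : ∀ z, h z ≤ penot A z := fun z =>
      (fenchel_moreau h hb hcv hlsc z).trans (econj_antitone hfle z)
    have hpge : ∀ z : X × WeakDual ℝ X, (pairing z : EReal) ≤ penot A z := fun z =>
      (hgep z).trans (h1 z)
    refine ⟨hpge, Set.ext fun z => ?_⟩
    constructor
    · intro hz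
      exact le_antisymm (penot_le_pairing A hz) (hpge z)
    · intro hz
      have hz' : penot A z = (pairing z : EReal) := hz
      have hle : h z ≤ (pairing z : EReal) := (h1 z).trans (le_of_eq hz')
      have : h z = (pairing z : EReal) := le_antisymm hle (hgep z)
      rw [hAeq]
      exact this
  · rintro ⟨hge, hA⟩
    refine ⟨penot A, fun z => ?_, ?_, econj_convex _, econj_lsc _, hge, hA⟩
    · exact ((bot_lt_iff_ne_bot.2 (EReal.coe_ne_bot (pairing z))).trans_le (hge z)).ne'
    · obtain ⟨a, ha⟩ := hne
      refine ⟨a, ?_⟩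
      have : penot A a = (pairing a : EReal) := (hA ▸ ha : a ∈ {z | penot A z = (pairing z : EReal)})
      rw [this]
      exact EReal.coe_ne_top _
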